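/- arXiv:2503.09983 — 4 statements merged into one kernel-verified Lean document; each statement's English description precedes it below -/
import Mathlib

section
/- Let A, B be k×k matrices with nonnegative integer entries over the max-plus algebra, with A not the zero matrix. If A^{⊗x} ≤ B entrywise for a positive integer x, then x ≤ 2·max_{ij} b_{ij} (assuming max_{ij} b_{ij} ≥ 1, i.e., B is nonzero). -/
/-- Max-plus matrix multiplication: `(A ⊗ B) i j = max_l (A i l + B l j)`. -/
def mpMul {k : ℕ} (A B : Matrix (Fin k) (Fin k) ℕ) : Matrix (Fin k) (Fin k) ℕ :=
  fun i j => Finset.univ.sup fun l => A i l + B l j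

/-- `mpPow A m` is the `m`-th max-plus tropical power `A^{⊗m}` of `A` (for `m ≥ 1`). -/
def mpPow {k : ℕ} (A : Matrix (Fin k) (Fin k) ℕ) : ℕ → Matrix (Fin k) (Fin k) ℕ
  | 0 => A
  | 1 => A
  | m + 1 => mpMul (mpPow A m) A

lemma mpPow_succ_succ {k : ℕ} (A : Matrix (Fin k) (Fin k) ℕ) (n : ℕ) :
    mpPow A (n + 2) = mpMul (mpPow A (n + 1)) A := rfl

lemma mpMul_ge {k : ℕ} (C A : Matrix (Fin k) (Fin k) ℕ) (i l j : Fin k) :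
    C i l + A l j ≤ mpMul C A i j :=
  Finset.le_sup (f := fun l => C i l + A l j) (Finset.mem_univ l)

lemma mpPow_key {k : ℕ} (A : Matrix (Fin k) (Fin k) ℕ) (i j : Fin k)
    (hij : 1 ≤ A i j) :
    ∀ n, 1 ≤ n → (n + 1) / 2 ≤ mpPow A n i j ∧ n / 2 ≤ mpPow A n i i := by
  intro n hn
  induction n with
  | zero => omega
  | succ m ih =>
    rcases Nat.eq_or_lt_of_le hn with h1 | h1
    · simp only [← h1]
      exact ⟨hij, by omega⟩
    · have hm : 1 ≤ m := by omega
      obtain ⟨ih1, ih2⟩ := ih hm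
      obtain ⟨m', rfl⟩ : ∃ m', m = m' + 1 := ⟨m - 1, by omega⟩
      rw [mpPow_succ_succ]
      constructor
      · calc (m' + 1 + 1 + 1) / 2 ≤ (m' + 1) / 2 + A i j := by omega
          _ ≤ mpPow A (m' + 1) i i + A i j := by omega
          _ ≤ _ := mpMul_ge _ _ i i j
      · calc (m' + 1 + 1) / 2 ≤ (m' + 1 + 1) / 2 + A j i := by omega
          _ ≤ mpPow A (m' + 1) i j + A j i := by omega
          _ ≤ _ := mpMul_ge _ _ i j i

theorem mpPow_le_bound {k : ℕ} (hk : 0 < k) (A B : Matrix (Fin k) (Fin k) ℕ)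
    (hA : ∃ i j, 0 < A i j)
    (hB : 1 ≤ Finset.univ.sup fun p : Fin k × Fin k => B p.1 p.2)
    (x : ℕ) (hx : 1 ≤ x) (h : ∀ i j, mpPow A x i j ≤ B i j) :
    x ≤ 2 * Finset.univ.sup fun p : Fin k × Fin k => B p.1 p.2 := by
  obtain ⟨i, j, hij⟩ := hA
  have key := (mpPow_key A i j hij x hx).1
  have hBij : (x + 1) / 2 ≤ B i j := key.trans (h i j)
  have hsup : B i j ≤ Finset.univ.sup fun p : Fin k × Fin k => B p.1 p.2 :=
    Finset.le_sup (f := fun p : Fin k × Fin k => B p.1 p.2) (Finset.mem_univ (i, j))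
  omega
end

section
/- Let k ≥ 1 and let nonnegative integers w₁, …, wₙ, c be given. Then there exist x₁, …, xₙ ∈ {0,1} with x₁w₁ + … + xₙwₙ = c if and only if there exist x₁, …, xₙ ∈ {0,1} with f(w₁)^{⊗x₁} ⊗ … ⊗ f(wₙ)^{⊗xₙ} = f(c) over the max-plus matrix semiring, where factors with xᵢ = 0 are omitted from the product and we require at least one xᵢ = 1 on both sides (equivalently, assume c > 0 or handle the empty product separately). -/
/-- `fmat k a` is the `k × k` constant matrix all of whose entries equal `a`. -/
def fmat (k : ℕ) (a : ℕ) : Matrix (Fin k) (Fin k) ℕ := fun _ _ => a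

/-- The max-plus product of a list of matrices (junk value `fmat k 0` on the empty list;
it is only used on nonempty lists). -/
def mpListProd {k : ℕ} : List (Matrix (Fin k) (Fin k) ℕ) → Matrix (Fin k) (Fin k) ℕ
  | [] => fmat k 0
  | A :: rest => rest.foldl mpMul A

/-- The max-plus product `⊗_{i ∈ S} f(wᵢ)` over a (nonempty) finite index set `S`,
with the factors taken in increasing order of their indices. -/
def mpProdOver {k n : ℕ} (w : Fin n → ℕ) (S : Finset (Fin n)) :
    Matrix (Fin k) (Fin k) ℕ :=
  mpListProd ((S.sort (· ≤ ·)).map fun i => fmat k (w i))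

/-! For `k ≥ 1` the map `a ↦ f(a)` is an injective monoid homomorphism from `(ℕ, +)` into the
max-plus matrices, since a maximum over a nonempty index set of a constant is that constant.
Hence the product over `S` is `f(∑ i ∈ S, wᵢ)`, which equals `f(c)` exactly when the sum is `c`. -/

section

variable {k : ℕ}

lemma mpMul_fmat (hk : 0 < k) (a b : ℕ) : mpMul (fmat k a) (fmat k b) = fmat k (a + b) := by
  have : Nonempty (Fin k) := ⟨⟨0, hk⟩⟩
  ext i j
  simp [mpMul, fmat, Finset.sup_const Finset.univ_nonempty]

lemma fmat_injective (hk : 0 < k) : Function.Injective (fmat k) :=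
  fun _ _ h => congrFun (congrFun h ⟨0, hk⟩) ⟨0, hk⟩

lemma foldl_mpMul_map_fmat (hk : 0 < k) (l : List ℕ) (a : ℕ) :
    (l.map (fmat k)).foldl mpMul (fmat k a) = fmat k (a + l.sum) := by
  induction l generalizing a with
  | nil => simp
  | cons b t ih =>
    simp only [List.map_cons, List.foldl_cons, mpMul_fmat hk, ih, List.sum_cons, add_assoc]

lemma mpListProd_map_fmat (hk : 0 < k) {l : List ℕ} (hl : l ≠ []) :
    mpListProd (l.map (fmat k)) = fmat k l.sum := by
  obtain ⟨a, t, rfl⟩ := List.exists_cons_of_ne_nil hl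
  simp only [List.map_cons, mpListProd, foldl_mpMul_map_fmat hk, List.sum_cons]

lemma mpProdOver_eq_fmat_sum (hk : 0 < k) {n : ℕ} (w : Fin n → ℕ) {S : Finset (Fin n)}
    (hS : S.Nonempty) : mpProdOver w S = fmat k (∑ i ∈ S, w i) := by
  have hsort : S.sort (· ≤ ·) ≠ [] :=
    List.ne_nil_of_length_pos (by rw [Finset.length_sort]; exact hS.card_pos)
  have hsum : ((S.sort (· ≤ ·)).map w).sum = ∑ i ∈ S, w i := by
    rw [Finset.sum_eq_multiset_sum, ← Finset.sort_eq S (· ≤ ·), Multiset.map_coe,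
      Multiset.sum_coe]
  rw [mpProdOver, ← hsum, ← mpListProd_map_fmat hk (List.map_eq_nil_iff.not.mpr hsort),
    List.map_map]
  rfl

end

theorem ssp_reduction_maxplus {k n : ℕ} (hk : 1 ≤ k) (w : Fin n → ℕ) (c : ℕ) :
    (∃ S : Finset (Fin n), S.Nonempty ∧ ∑ i ∈ S, w i = c) ↔
    (∃ S : Finset (Fin n), S.Nonempty ∧ mpProdOver (k := k) w S = fmat k c) := by
  refine exists_congr fun S => and_congr_right fun hS => ?_
  rw [mpProdOver_eq_fmat_sum hk w hS, (fmat_injective hk).eq_iff]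
end

section
/- Let X, Y be k×k matrices with positive integer entries and let A = X ⊗ Y be their max-times product. Then Σ_{i,j} size₂(x_{ij}) + Σ_{i,j} size₂(y_{ij}) ≤ Σ_{i,j} size₂(a_{ij}) + k². -/
/-- `size₂ n = ⌊log₂ n⌋ + 1`, the number of binary digits of a positive integer `n`. -/
def size2 (n : ℕ) : ℕ := Nat.log 2 n + 1

/-- Max-times matrix multiplication: `(A ⊗ B) i j = max_l (A i l * B l j)`. -/
def mtMul {k : ℕ} (A B : Matrix (Fin k) (Fin k) ℕ) : Matrix (Fin k) (Fin k) ℕ :=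
  fun i j => Finset.univ.sup fun l => A i l * B l j

lemma log_add_log_le {a b : ℕ} (ha : 1 ≤ a) (hb : 1 ≤ b) :
    Nat.log 2 a + Nat.log 2 b ≤ Nat.log 2 (a * b) := by
  apply Nat.le_log_of_pow_le one_lt_two
  rw [pow_add]
  exact Nat.mul_le_mul (Nat.pow_log_le_self 2 (by omega)) (Nat.pow_log_le_self 2 (by omega))

lemma size2_mul {a b c : ℕ} (ha : 1 ≤ a) (hb : 1 ≤ b) (hc : a * b ≤ c) :
    size2 a + size2 b ≤ size2 c + 1 := by
  have h1 := log_add_log_le ha hb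
  have h2 := Nat.log_mono_right (b := 2) hc
  unfold size2
  omega

theorem size2_sum_mtMul {k : ℕ} (X Y A : Matrix (Fin k) (Fin k) ℕ)
    (hX : ∀ i j, 1 ≤ X i j) (hY : ∀ i j, 1 ≤ Y i j) (hA : A = mtMul X Y) :
    (∑ i : Fin k, ∑ j : Fin k, size2 (X i j)) + (∑ i : Fin k, ∑ j : Fin k, size2 (Y i j)) ≤
      (∑ i : Fin k, ∑ j : Fin k, size2 (A i j)) + k ^ 2 := by
  rcases Nat.eq_zero_or_pos k with rfl | hk
  · simp
  haveI : NeZero k := ⟨hk.ne'⟩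
  have key : ∀ i j : Fin k, size2 (X i (i + j)) + size2 (Y (i + j) j) ≤ size2 (A i j) + 1 := by
    intro i j
    apply size2_mul (hX _ _) (hY _ _)
    rw [hA]
    exact Finset.le_sup (f := fun l => X i l * Y l j) (Finset.mem_univ (i + j))
  calc (∑ i : Fin k, ∑ j : Fin k, size2 (X i j)) + (∑ i : Fin k, ∑ j : Fin k, size2 (Y i j))
      = ∑ i : Fin k, ∑ j : Fin k, (size2 (X i (i + j)) + size2 (Y (i + j) j)) := by
        simp only [Finset.sum_add_distrib]
        congr 1
        · exact Finset.sum_congr rfl fun i _ =>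
            (Fintype.sum_equiv (Equiv.addLeft i) _ _ (fun j => rfl)).symm
        · conv_lhs => rw [Finset.sum_comm]
          conv_rhs => rw [Finset.sum_comm]
          refine Finset.sum_congr rfl fun j _ => ?_
          exact (Fintype.sum_equiv (Equiv.addRight j) (fun i => size2 (Y (i + j) j))
            (fun i => size2 (Y i j)) (fun i => rfl)).symm
    _ ≤ ∑ i : Fin k, ∑ j : Fin k, (size2 (A i j) + 1) := by
        exact Finset.sum_le_sum fun i _ => Finset.sum_le_sum fun j _ => key i j
    _ = (∑ i : Fin k, ∑ j : Fin k, size2 (A i j)) + k ^ 2 := by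
        simp [Finset.sum_add_distrib, pow_two, Finset.mul_sum]
end

section
/- Let p₁ < p₂ < … < p_{3m} and q₁ < … < qₙ be distinct primes, and for each i ∈ {1,…,n} let cᵢ = {aᵢ₁, aᵢ₂, aᵢ₃} ⊆ {1,…,3m} be a 3-element set, with associated primes p_{i1}, p_{i2}, p_{i3}. Then there exist nonnegative integers x₁, y₁, …, xₙ, yₙ with ∏ᵢ (p_{i1}p_{i2}p_{i3}qᵢ)^{xᵢ} · qᵢ^{yᵢ} = p₁p₂⋯p_{3m}·q₁⋯qₙ if and only if there exists a subset S ⊆ {1,…,n} such that the sets {cᵢ : i ∈ S} form a partition of {1,…,3m} (an exact cover by 3-sets). -/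
theorem kp_reduction_X3C (m n : ℕ)
    (p : Fin (3 * m) → ℕ) (q : Fin n → ℕ)
    (hp : ∀ i, (p i).Prime) (hq : ∀ i, (q i).Prime)
    (hpmono : StrictMono p) (hqmono : StrictMono q)
    (hpq : ∀ i j, p i ≠ q j)
    (c : Fin n → Finset (Fin (3 * m))) (hc : ∀ i, (c i).card = 3) :
    (∃ x y : Fin n → ℕ,
        (∏ i : Fin n, ((∏ a ∈ c i, p a) * q i) ^ x i * q i ^ y i) =
          (∏ a : Fin (3 * m), p a) * ∏ i : Fin n, q i) ↔
    (∃ S : Finset (Fin n),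
        (∀ i ∈ S, ∀ j ∈ S, i ≠ j → Disjoint (c i) (c j)) ∧
        S.biUnion c = Finset.univ) := by
  have hp0 : ∀ a, p a ≠ 0 := fun a => (hp a).pos.ne'
  have hq0 : ∀ i, q i ≠ 0 := fun i => (hq i).pos.ne'
  have hcp0 : ∀ i, (∏ a ∈ c i, p a) ≠ 0 :=
    fun i => Finset.prod_ne_zero_iff.mpr (fun a _ => hp0 a)
  have hP0 : ∀ i, ((∏ a ∈ c i, p a) * q i) ≠ 0 := fun i => mul_ne_zero (hcp0 i) (hq0 i)
  constructor
  · rintro ⟨x, y, hxy⟩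
    -- Evaluate factorizations
    have hterm : ∀ (i : Fin n) (r : ℕ),
        (((∏ a ∈ c i, p a) * q i) ^ x i * q i ^ y i).factorization r
          = x i * (((∏ a ∈ c i, p a) * q i).factorization r)
            + y i * ((q i).factorization r) := by
      intro i r
      rw [Nat.factorization_mul (pow_ne_zero _ (hP0 i)) (pow_ne_zero _ (hq0 i)),
        Nat.factorization_pow, Nat.factorization_pow]
      simp [mul_comm]
    have key : ∀ r : ℕ,
        (∑ i : Fin n, (x i * (((∏ a ∈ c i, p a) * q i).factorization r)
            + y i * ((q i).factorization r)))
          = (∑ a : Fin (3 * m), (p a).factorization r)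
            + ∑ i : Fin n, (q i).factorization r := by
      intro r
      have h := congrArg (fun N => N.factorization r) hxy
      rw [Nat.factorization_prod
          (fun i _ => mul_ne_zero (pow_ne_zero _ (hP0 i)) (pow_ne_zero _ (hq0 i))),
        Nat.factorization_mul (Finset.prod_ne_zero_iff.mpr fun a _ => hp0 a)
          (Finset.prod_ne_zero_iff.mpr fun i _ => hq0 i),
        Nat.factorization_prod (fun a _ => hp0 a),
        Nat.factorization_prod (fun i _ => hq0 i)] at h
      simp only [Finsupp.coe_add, Pi.add_apply, Finsupp.finset_sum_apply,
        Finsupp.add_apply] at h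
      rw [← h]
      exact Finset.sum_congr rfl fun i _ => (hterm i r).symm
    -- exponents of q j
    have hqq : ∀ i j : Fin n, (q i).factorization (q j) = if i = j then 1 else 0 := by
      intro i j
      rw [(hq i).factorization, Finsupp.single_apply]
      simp [hqmono.injective.eq_iff]
    have hpqz : ∀ (a : Fin (3 * m)) (j : Fin n), (p a).factorization (q j) = 0 := by
      intro a j
      rw [(hp a).factorization, Finsupp.single_apply]
      simp [hpq a j]
    have hpp : ∀ a b : Fin (3 * m), (p a).factorization (p b) = if a = b then 1 else 0 := by
      intro a b
      rw [(hp a).factorization, Finsupp.single_apply]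
      simp [hpmono.injective.eq_iff]
    have hqpz : ∀ (i : Fin n) (b : Fin (3 * m)), (q i).factorization (p b) = 0 := by
      intro i b
      rw [(hq i).factorization, Finsupp.single_apply]
      simp [(hpq b i).symm]
    have hPq : ∀ i j : Fin n,
        ((∏ a ∈ c i, p a) * q i).factorization (q j) = if i = j then 1 else 0 := by
      intro i j
      rw [Nat.factorization_mul (hcp0 i) (hq0 i),
        Nat.factorization_prod (fun a _ => hp0 a)]
      simp [Finsupp.finset_sum_apply, hpqz, hqq]
    have hPp : ∀ (i : Fin n) (b : Fin (3 * m)),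
        ((∏ a ∈ c i, p a) * q i).factorization (p b) = if b ∈ c i then 1 else 0 := by
      intro i b
      rw [Nat.factorization_mul (hcp0 i) (hq0 i),
        Nat.factorization_prod (fun a _ => hp0 a)]
      simp only [Finsupp.add_apply, Finsupp.finset_sum_apply, hpp, hqpz, add_zero]
      rw [Finset.sum_ite_eq' (c i) b (fun _ => 1)]
    have hxyone : ∀ j, x j + y j = 1 := by
      intro j
      have h := key (q j)
      simp only [hPq, hqq, hpqz, mul_ite, mul_one, mul_zero,
        Finset.sum_const_zero, zero_add] at h
      rw [Finset.sum_add_distrib, Finset.sum_ite_eq' Finset.univ j x,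
        Finset.sum_ite_eq' Finset.univ j y, Finset.sum_ite_eq' Finset.univ j
        (fun _ => 1)] at h
      simpa using h
    have hxle : ∀ i, x i ≤ 1 := fun i => (hxyone i) ▸ Nat.le_add_right _ _
    have hb : ∀ b : Fin (3 * m), ∑ i : Fin n, x i * (if b ∈ c i then 1 else 0) = 1 := by
      intro b
      have h := key (p b)
      simp only [hPp, hpp, hqpz, mul_zero, add_zero, Finset.sum_const_zero] at h
      rw [Finset.sum_ite_eq' Finset.univ b (fun _ => 1)] at h
      simpa using h
    refine ⟨Finset.univ.filter (fun i => x i = 1), ?_, ?_⟩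
    · -- disjointness
      intro i hi j hj hij
      simp only [Finset.mem_filter] at hi hj
      rw [Finset.disjoint_left]
      intro b hbi hbj
      have h := hb b
      have h2 : (2 : ℕ) ≤ ∑ i : Fin n, x i * (if b ∈ c i then 1 else 0) := by
        have : ({i, j} : Finset (Fin n)) ⊆ Finset.univ := Finset.subset_univ _
        calc (2 : ℕ) = ∑ k ∈ ({i, j} : Finset (Fin n)),
              x k * (if b ∈ c k then 1 else 0) := by
              rw [Finset.sum_pair hij]
              simp [hi.2, hj.2, hbi, hbj]
          _ ≤ _ := Finset.sum_le_sum_of_subset this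
      omega
    · -- cover
      rw [Finset.eq_univ_iff_forall]
      intro b
      have h := hb b
      by_contra hnb
      rw [Finset.mem_biUnion] at hnb
      push_neg at hnb
      have : ∑ i : Fin n, x i * (if b ∈ c i then 1 else 0) = 0 := by
        apply Finset.sum_eq_zero
        intro i _
        by_cases hxi : x i = 1
        · have := hnb i (by simp [hxi])
          simp [this]
        · have : x i = 0 := by have := hxle i; omega
          simp [this]
      omega
  · rintro ⟨S, hdisj, hcover⟩
    refine ⟨fun i => if i ∈ S then 1 else 0, fun i => if i ∈ S then 0 else 1, ?_⟩
    have : ∀ i : Fin n,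
        ((∏ a ∈ c i, p a) * q i) ^ (if i ∈ S then 1 else 0) * q i ^ (if i ∈ S then 0 else 1)
          = (if i ∈ S then (∏ a ∈ c i, p a) else 1) * q i := by
      intro i
      by_cases hi : i ∈ S <;> simp [hi]
    rw [Finset.prod_congr rfl (fun i _ => this i), Finset.prod_mul_distrib]
    congr 1
    rw [Finset.prod_ite_mem Finset.univ S (fun i => ∏ a ∈ c i, p a),
      Finset.univ_inter,
      ← Finset.prod_biUnion (fun i hi j hj hij => hdisj i hi j hj hij), hcover]
end
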